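/- The distribution of the absolute value of a standard Cauchy random variable, with cdf F(x) = (2/π) arctan(x) for x ≥ 0 and F(x) = 0 for x < 0, is not super Fréchet: the function φ(x) = F⁻¹(G(x)) = tan((π/2) e^{−1/x}), where G(x) = e^{−1/x} is the standard Fréchet cdf, is not convex on (0, ∞). -/

import Mathlib

open MeasureTheory

/-- The generalized inverse (quantile function) `F⁻¹ (u) = inf {x : F x ≥ u}` of a cdf. -/
noncomputable def genInv (F : ℝ → ℝ) (u : ℝ) : ℝ :=
  sInf {x : ℝ | u ≤ F x}

/-- The cdf of the absolute value of a standard Cauchy random variable: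
`F x = (2/π) arctan x` for `x ≥ 0`, and `0` for `x < 0`. -/
noncomputable def absCauchyCDF (x : ℝ) : ℝ :=
  if 0 ≤ x then 2 / Real.pi * Real.arctan x else 0

open Real

private lemma double_step' {y sl su cl cu SL SU CL CU : ℝ}
    (h1 : sl ≤ Real.sin y) (h2 : Real.sin y ≤ su)
    (h3 : cl ≤ Real.cos y) (h4 : Real.cos y ≤ cu)
    (h5 : 0 ≤ sl) (h6 : 0 ≤ cl)
    (e1 : SL ≤ 2 * sl * cl) (e2 : 2 * su * cu ≤ SU)
    (e3 : CL ≤ 2 * cl ^ 2 - 1) (e4 : 2 * cu ^ 2 - 1 ≤ CU) :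
    SL ≤ Real.sin (2 * y) ∧ Real.sin (2 * y) ≤ SU ∧
      CL ≤ Real.cos (2 * y) ∧ Real.cos (2 * y) ≤ CU := by
  rw [Real.sin_two_mul, Real.cos_two_mul]
  have hs0 : 0 ≤ Real.sin y := le_trans h5 h1
  have hc0 : 0 ≤ Real.cos y := le_trans h6 h3
  refine ⟨?_, ?_, ?_, ?_⟩
  · nlinarith [mul_le_mul h1 h3 h6 hs0]
  · nlinarith [mul_le_mul h2 h4 hc0 (le_trans hs0 h2)]
  · nlinarith [mul_self_le_mul_self h6 h3]
  · nlinarith [mul_self_le_mul_self hc0 h4]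

private lemma base_step' (q sl su cl cu : ℝ) (hq0 : 0 ≤ q) (hq1 : q ≤ 1)
    (hsl : sl ≤ q - q ^ 3 / 6 - q ^ 4 * (5 / 96))
    (hsu : q - q ^ 3 / 6 + q ^ 4 * (5 / 96) ≤ su)
    (hcl : cl ≤ 1 - q ^ 2 / 2 - q ^ 4 * (5 / 96))
    (hcu : 1 - q ^ 2 / 2 + q ^ 4 * (5 / 96) ≤ cu) :
    sl ≤ Real.sin q ∧ Real.sin q ≤ su ∧ cl ≤ Real.cos q ∧ Real.cos q ≤ cu := by
  have habs : |q| = q := abs_of_nonneg hq0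
  have hq : |q| ≤ 1 := by rw [habs]; exact hq1
  have hs := Real.sin_bound hq
  have hc := Real.cos_bound hq
  rw [abs_sub_le_iff, habs] at hs hc
  exact ⟨by linarith [hs.2, pow_le_pow_of_le_one hq0 hq1 (show 4 ≤ 5 by norm_num), pow_nonneg hq0 4], by linarith [hs.1, pow_le_pow_of_le_one hq0 hq1 (show 4 ≤ 5 by norm_num), pow_nonneg hq0 4], by linarith [hc.2], by linarith [hc.1]⟩

private lemma tanb1 : Real.tan (0.5779 : ℝ) ≤ 0.6528 := by
  obtain ⟨a1, a2, a3, a4⟩ := base_step' 0.144475 0.1439497 0.1439951 0.9895407 0.9895862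
    (by norm_num) (by norm_num) (by norm_num) (by norm_num) (by norm_num) (by norm_num)
  obtain ⟨b1, b2, b3, b4⟩ := double_step' a1 a2 a3 a4 (by norm_num) (by norm_num)
    (show (0.2848881:ℝ) ≤ _ by norm_num) (show _ ≤ (0.2849912:ℝ) by norm_num)
    (show (0.9583815:ℝ) ≤ _ by norm_num) (show _ ≤ (0.9585617:ℝ) by norm_num)
  norm_num at b1 b2 b3 b4
  obtain ⟨c1, c2, c3, c4⟩ := double_step' b1 b2 b3 b4 (by norm_num) (by norm_num)
    (show (0.5460629:ℝ) ≤ _ by norm_num) (show _ ≤ (0.5463633:ℝ) by norm_num)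
    (show (0.8369901:ℝ) ≤ _ by norm_num) (show _ ≤ (0.8376811:ℝ) by norm_num)
  norm_num at c1 c2 c3 c4
  rw [Real.tan_eq_sin_div_cos, div_le_iff₀ (by linarith)]
  nlinarith

private lemma tanb2 : (1.4019 : ℝ) ≤ Real.tan (0.9527 : ℝ) := by
  obtain ⟨a1, a2, a3, a4⟩ := base_step' 0.238175 0.2357555 0.2360908 0.9714687 0.9718040
    (by norm_num) (by norm_num) (by norm_num) (by norm_num) (by norm_num) (by norm_num)
  obtain ⟨b1, b2, b3, b4⟩ := double_step' a1 a2 a3 a4 (by norm_num) (by norm_num)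
    (show (0.4580581:ℝ) ≤ _ by norm_num) (show _ ≤ (0.4588680:ℝ) by norm_num)
    (show (0.8875028:ℝ) ≤ _ by norm_num) (show _ ≤ (0.8888061:ℝ) by norm_num)
  norm_num at b1 b2 b3 b4
  obtain ⟨c1, c2, c3, c4⟩ := double_step' b1 b2 b3 b4 (by norm_num) (by norm_num)
    (show (0.8130556:ℝ) ≤ _ by norm_num) (show _ ≤ (0.8156894:ℝ) by norm_num)
    (show (0.5753224:ℝ) ≤ _ by norm_num) (show _ ≤ (0.5799526:ℝ) by norm_num)
  norm_num at c1 c2 c3 c4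
  rw [Real.tan_eq_sin_div_cos, le_div_iff₀ (by linarith)]
  nlinarith

private lemma tanb3 : Real.tan (1.1256 : ℝ) ≤ 2.1368 := by
  obtain ⟨a1, a2, a3, a4⟩ := base_step' 0.2814 0.2773595 0.2780128 0.9600804 0.9607337
    (by norm_num) (by norm_num) (by norm_num) (by norm_num) (by norm_num) (by norm_num)
  obtain ⟨b1, b2, b3, b4⟩ := double_step' a1 a2 a3 a4 (by norm_num) (by norm_num)
    (show (0.5325748:ℝ) ≤ _ by norm_num) (show _ ≤ (0.5341926:ℝ) by norm_num)
    (show (0.8435087:ℝ) ≤ _ by norm_num) (show _ ≤ (0.8460185:ℝ) by norm_num)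
  norm_num at b1 b2 b3 b4
  obtain ⟨c1, c2, c3, c4⟩ := double_step' b1 b2 b3 b4 (by norm_num) (by norm_num)
    (show (0.8984629:ℝ) ≤ _ by norm_num) (show _ ≤ (0.9038737:ℝ) by norm_num)
    (show (0.4230138:ℝ) ≤ _ by norm_num) (show _ ≤ (0.4314947:ℝ) by norm_num)
  norm_num at c1 c2 c3 c4
  rw [Real.tan_eq_sin_div_cos, div_le_iff₀ (by linarith)]
  nlinarith

private lemma exp1_ub' : Real.exp (-1 : ℝ) ≤ 0.36788 := by
  have h := Real.exp_one_gt_d9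
  have hp := Real.exp_pos 1
  rw [Real.exp_neg]
  have h2 : (Real.exp 1)⁻¹ * Real.exp 1 = 1 := inv_mul_cancel₀ (ne_of_gt hp)
  nlinarith [inv_pos.mpr hp]

private lemma exp2_lb' : (0.6065304 : ℝ) ≤ Real.exp (-1 / 2 : ℝ) := by
  have hb := Real.exp_bound (x := -1/2) (by rw [abs_le]; constructor <;> norm_num)
    (n := 8) (by norm_num)
  rw [abs_sub_le_iff] at hb
  have h2 := hb.2
  rw [show |(-1/2 : ℝ)| = 1/2 by rw [abs_of_nonpos (by norm_num)]; norm_num] at h2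
  norm_num [Finset.sum_range_succ, Nat.factorial] at h2 ⊢
  linarith

private lemma exp3_ub' : Real.exp (-1 / 3 : ℝ) ≤ 0.7165318 := by
  have hb := Real.exp_bound (x := -1/3) (by rw [abs_le]; constructor <;> norm_num)
    (n := 6) (by norm_num)
  rw [abs_sub_le_iff] at hb
  have h1 := hb.1
  rw [show |(-1/3 : ℝ)| = 1/3 by rw [abs_of_nonpos (by norm_num)]; norm_num] at h1
  norm_num [Finset.sum_range_succ, Nat.factorial] at h1 ⊢
  linarith

/-- The distribution of the absolute value of a standard Cauchy random variable is not
super Fréchet: the function `φ x = F⁻¹ (G x) = tan ((π/2) exp (-1/x))`, where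
`G x = exp (-1/x)` is the standard Fréchet cdf, is not convex on `(0, ∞)`. -/
theorem stmt16 :
    (∀ x : ℝ, 0 < x →
      genInv absCauchyCDF (Real.exp (-1 / x)) =
        Real.tan (Real.pi / 2 * Real.exp (-1 / x))) ∧
    ¬ ConvexOn ℝ (Set.Ioi 0) (fun x => Real.tan (Real.pi / 2 * Real.exp (-1 / x))) := by
  constructor
  · intro x hx
    show sInf {y : ℝ | Real.exp (-1 / x) ≤ absCauchyCDF y} = _
    unfold absCauchyCDF
    set u := Real.exp (-1 / x) with hu
    have hu0 : 0 < u := Real.exp_pos _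
    have hu1 : u < 1 := by
      have h0 : -1 / x < 0 := div_neg_of_neg_of_pos (by norm_num) hx
      calc u < Real.exp 0 := Real.exp_lt_exp.mpr h0
      _ = 1 := Real.exp_zero
    have hπ : (0:ℝ) < π := pi_pos
    have hπ2 : (0:ℝ) < π / 2 := by linarith
    have hθl : 0 < π / 2 * u := by positivity
    have hθu : π / 2 * u < π / 2 := by nlinarith
    set t := Real.tan (π / 2 * u) with ht
    have ht0 : 0 < t := Real.tan_pos_of_pos_of_lt_pi_div_two hθl hθu
    have harctan : Real.arctan t = π / 2 * u := Real.arctan_tan (by linarith) hθu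
    have hkey : ∀ y : ℝ, 2 / π * Real.arctan y = Real.arctan y / (π / 2) := by
      intro y; field_simp
    have hset : {y : ℝ | u ≤ (if 0 ≤ y then 2 / Real.pi * Real.arctan y else 0)} = Set.Ici t := by
      ext y
      simp only [Set.mem_setOf_eq, Set.mem_Ici]
      constructor
      · intro h
        by_cases hy : 0 ≤ y
        · rw [if_pos hy, hkey] at h
          have h2 : Real.arctan t ≤ Real.arctan y := by
            rw [harctan, mul_comm]; exact (le_div_iff₀ hπ2).mp h
          exact Real.arctan_strictMono.le_iff_le.mp h2
        · rw [if_neg hy] at h; linarith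
      · intro h
        have hy : 0 ≤ y := le_trans ht0.le h
        rw [if_pos hy, hkey]
        rw [le_div_iff₀ hπ2, mul_comm, ← harctan]
        exact Real.arctan_strictMono.monotone h
    rw [hset, csInf_Ici]
  · intro hcv
    have h1m : (1:ℝ) ∈ Set.Ioi (0:ℝ) := by norm_num
    have h3m : (3:ℝ) ∈ Set.Ioi (0:ℝ) := by norm_num
    have hc := hcv.2 h1m h3m (by norm_num : (0:ℝ) ≤ 1/2) (by norm_num : (0:ℝ) ≤ 1/2)
      (by norm_num : (1:ℝ)/2 + 1/2 = 1)
    simp only [smul_eq_mul] at hc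
    norm_num at hc
    have hπl : 3.141592 < π := Real.pi_gt_d6
    have hπu : π < 3.141593 := Real.pi_lt_d6
    have he1 : 0 < Real.exp (-1 : ℝ) := Real.exp_pos _
    have he2 : 0 < Real.exp (-1 / 2 : ℝ) := Real.exp_pos _
    have he3 : 0 < Real.exp (-1 / 3 : ℝ) := Real.exp_pos _
    have A1 : π / 2 * Real.exp (-1 : ℝ) < 0.5779 := by
      nlinarith [mul_le_mul hπu.le exp1_ub' he1.le (by norm_num : (0:ℝ) ≤ 3.141593)]
    have A2 : (0.9527 : ℝ) < π / 2 * Real.exp (-1 / 2 : ℝ) := by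
      nlinarith [mul_le_mul hπl.le exp2_lb' (by norm_num : (0:ℝ) ≤ 0.6065304) Real.pi_pos.le]
    have A3 : π / 2 * Real.exp (-1 / 3 : ℝ) < 1.1256 := by
      nlinarith [mul_le_mul hπu.le exp3_ub' he3.le (by norm_num : (0:ℝ) ≤ 3.141593)]
    have A2' : π / 2 * Real.exp (-1 / 2 : ℝ) < π / 2 := by
      have : Real.exp (-1 / 2 : ℝ) < 1 := by
        calc Real.exp (-1 / 2 : ℝ) < Real.exp 0 := Real.exp_lt_exp.mpr (by norm_num)
        _ = 1 := Real.exp_zero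
      nlinarith
    have B1 : Real.tan (π / 2 * Real.exp (-1 : ℝ)) < Real.tan 0.5779 :=
      Real.tan_lt_tan_of_nonneg_of_lt_pi_div_two (by positivity) (by linarith) A1
    have B2 : Real.tan 0.9527 < Real.tan (π / 2 * Real.exp (-1 / 2 : ℝ)) :=
      Real.tan_lt_tan_of_nonneg_of_lt_pi_div_two (by norm_num) A2' A2
    have B3 : Real.tan (π / 2 * Real.exp (-1 / 3 : ℝ)) < Real.tan 1.1256 :=
      Real.tan_lt_tan_of_nonneg_of_lt_pi_div_two (by positivity) (by linarith) A3
    linarith [tanb1, tanb2, tanb3]
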